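/- Let K be a field. The solution space of every Hermite–Padé interpolation problem over K admits a normalised σ-basis: there exists a sequence (p₁,…,p_m) of solutions which is a σ-basis and which is sorted, reduced, and has all of its members normalised. -/

import Mathlib

/-!
Order the monomials `x ^ k • eᵢ` lexicographically by `(k - nᵢ, -i)`. The largest term of a
nonzero vector `p` is then `x ^ (deg p_c) • e_c` for its critical index `c`, and
`defect p = n_c - deg p_c`: σ-bases are Gröbner bases of the module of solutions for this
term order.

Since `x ^ σ • e_j` is a solution, every position `j` carries leading terms of solutions; let
`d j` be their least degree. Pick solutions `G j` with leading term `x ^ (d j) • e_j` and reduce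
each `G j` by the others with the division algorithm; this clears the components `s ≠ j` down to
degree `< d s` and leaves the leading term alone. Dividing an arbitrary solution by the resulting
family leaves a solution with no term divisible by any `x ^ (d s) • e_s`, which by minimality of
`d` must vanish. Leading terms in distinct positions cannot cancel, so the leading term of
`∑ β j • F j` is the largest of the `x ^ (deg β j + d j) • e_j`: this gives uniqueness of the
representation and the defect bound. Finally sort by `(d j - n j, j)`.
-/

open Polynomial

/-- The term `nᵢ - deg pᵢ` entering the defect, valued `⊤` when `pᵢ = 0`
(i.e. when `deg pᵢ = -∞`). -/
def defectTerm {K : Type*} [Semiring K] (ni : ℕ) (p : K[X]) : WithTop ℤ :=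
  WithBot.recBotCoe (⊤ : WithTop ℤ) (fun d : ℕ => (((ni : ℤ) - (d : ℤ) : ℤ) : WithTop ℤ)) p.degree

/-- The defect of a polynomial vector `p` with respect to the degree bounds `n`:
the minimum of `nᵢ - deg pᵢ` over all components (components with `pᵢ = 0`
contribute `⊤` and hence do not affect the minimum unless `p = 0`). -/
def defect {K : Type*} [Semiring K] {m : ℕ} (n : Fin m → ℕ) (p : Fin m → K[X]) : WithTop ℤ :=
  Finset.univ.inf fun i => defectTerm (n i) (p i)

/-- `p` is a solution of the Hermite–Padé interpolation problem given by the
power series `f` and the order `σ`: the coefficient of `x^k` in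
`p₁·f₁ + ⋯ + p_m·f_m` vanishes for all `k < σ`, i.e. `ord (p·f) ≥ σ`. -/
def IsSolution {K : Type*} [CommSemiring K] {m : ℕ} (f : Fin m → PowerSeries K) (σ : ℕ)
    (p : Fin m → K[X]) : Prop :=
  ∀ k < σ, PowerSeries.coeff k (∑ i, (p i : PowerSeries K) * f i) = 0

/-- `i` is the critical index of `p`: the least index at which the defect is attained. -/
def IsCriticalIndex {K : Type*} [Semiring K] {m : ℕ} (n : Fin m → ℕ) (p : Fin m → K[X])
    (i : Fin m) : Prop :=
  defectTerm (n i) (p i) = defect n p ∧ ∀ j : Fin m, j < i → defectTerm (n j) (p j) ≠ defect n p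

/-- `p` is normalised: its component at its critical index is monic. -/
def IsNormalisedVec {K : Type*} [Semiring K] {m : ℕ} (n : Fin m → ℕ) (p : Fin m → K[X]) : Prop :=
  ∃ i : Fin m, IsCriticalIndex n p i ∧ (p i).Monic

/-- `p` is reduced with respect to `q`: at the critical index `j` of `q` we have
`deg p_j < deg q_j`. -/
def ReducedWrt {K : Type*} [Semiring K] {m : ℕ} (n : Fin m → ℕ) (p q : Fin m → K[X]) : Prop :=
  ∀ j : Fin m, IsCriticalIndex n q j → (p j).degree < (q j).degree

/-- A sequence of polynomial vectors is sorted if for `r < s` either the defect of `P r`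
is strictly larger than that of `P s`, or the defects agree and the critical index of
`P r` is smaller than that of `P s`. -/
def IsSortedSeq {K : Type*} [Semiring K] {m : ℕ} (n : Fin m → ℕ)
    (P : Fin m → Fin m → K[X]) : Prop :=
  ∀ r s : Fin m, r < s →
    defect n (P s) < defect n (P r) ∨
      (defect n (P r) = defect n (P s) ∧
        ∀ i j : Fin m, IsCriticalIndex n (P r) i → IsCriticalIndex n (P s) j → i < j)

/-- A sequence of polynomial vectors is normalised if it is sorted, pairwise reduced,
and all its members are normalised. -/
def IsNormalisedSeq {K : Type*} [Semiring K] {m : ℕ} (n : Fin m → ℕ)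
    (P : Fin m → Fin m → K[X]) : Prop :=
  IsSortedSeq n P ∧ (∀ r s : Fin m, r ≠ s → ReducedWrt n (P r) (P s)) ∧
    ∀ r, IsNormalisedVec n (P r)

/-- `P` is a σ-basis of the Hermite–Padé interpolation problem given by `f`, `n` and `σ`:
every member is a solution, every solution `q` has a unique representation
`q = Σ_r α_r • P_r`, and in this representation `defect q ≤ defect (P r) - deg (α r)`
(written additively as `defect q + deg (α r) ≤ defect (P r)`) whenever `α r ≠ 0`. -/
def IsSigmaBasis {K : Type*} [CommRing K] {m : ℕ} (f : Fin m → PowerSeries K)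
    (n : Fin m → ℕ) (σ : ℕ) (P : Fin m → Fin m → K[X]) : Prop :=
  (∀ r, IsSolution f σ (P r)) ∧
    ∀ q : Fin m → K[X], IsSolution f σ q →
      (∃! α : Fin m → K[X], ∀ i, q i = ∑ r, α r * P r i) ∧
      ∀ α : Fin m → K[X], (∀ i, q i = ∑ r, α r * P r i) →
        ∀ r, α r ≠ 0 →
          defect n q + (((α r).natDegree : ℤ) : WithTop ℤ) ≤ defect n (P r)

theorem defectTerm_of_ne_zero {R : Type*} [Semiring R] {p : R[X]} (hp : p ≠ 0) (ni : ℕ) :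
    defectTerm ni p = (((ni : ℤ) - p.natDegree : ℤ) : WithTop ℤ) := by
  rw [defectTerm, degree_eq_natDegree hp]
  rfl

theorem IsCriticalIndex.unique {R : Type*} [Semiring R] {m : ℕ} {n : Fin m → ℕ}
    {p : Fin m → R[X]} {i j : Fin m} (hi : IsCriticalIndex n p i) (hj : IsCriticalIndex n p j) :
    i = j := by
  rcases lt_trichotomy i j with h | h | h
  · exact absurd hi.1 (hj.2 i h)
  · exact h
  · exact absurd hj.1 (hi.2 j h)

theorem IsSigmaBasis.comp_perm {R : Type*} [CommRing R] {m : ℕ} {f : Fin m → PowerSeries R}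
    {n : Fin m → ℕ} {σ : ℕ} {P : Fin m → Fin m → R[X]} (h : IsSigmaBasis f n σ P)
    (π : Equiv.Perm (Fin m)) : IsSigmaBasis f n σ (P ∘ π) := by
  have hsum (α : Fin m → R[X]) (i : Fin m) :
      ∑ r, α r * (P ∘ π) r i = ∑ r, α (π.symm r) * P r i := by
    rw [← Equiv.sum_comp π (fun r => α (π.symm r) * P r i)]
    simp
  refine ⟨fun r => h.1 (π r), fun q hq => ⟨?_, fun α hα r hr => ?_⟩⟩
  · obtain ⟨β, hβ, huniq⟩ := (h.2 q hq).1
    refine ⟨β ∘ π, fun i => by rw [hsum]; simpa using hβ i, fun α hα => ?_⟩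
    have := huniq (α ∘ π.symm) fun i => by rw [hα i, hsum]; rfl
    funext r
    simpa using congr_fun this (π r)
  · simpa using (h.2 q hq).2 (α ∘ π.symm) (fun i => by rw [hα i, hsum]; rfl) (π r)
      (by simpa using hr)

namespace HermitePade

variable {m : ℕ} {n : Fin m → ℕ}

/-- The weight of `x ^ k • eᵢ` for the term order `(k - n i, -i)`, encoded in `ℕ`; the shift by
`∑ n` keeps `k - n i` from truncating. -/
def weight (n : Fin m → ℕ) (k : ℕ) (i : Fin m) : ℕ :=
  (k + ∑ j, n j - n i) * m + (m - 1 - i)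

theorem weight_add (n : Fin m → ℕ) (k e : ℕ) (i : Fin m) :
    weight n (k + e) i = weight n k i + e * m := by
  have : n i ≤ ∑ j, n j := Finset.single_le_sum (fun _ _ => Nat.zero_le _) (Finset.mem_univ i)
  simp only [weight]
  rw [show k + e + ∑ j, n j - n i = k + ∑ j, n j - n i + e by omega]
  ring

theorem weight_mono (n : Fin m → ℕ) {k k' : ℕ} (h : k ≤ k') (i : Fin m) :
    weight n k i ≤ weight n k' i := by
  obtain ⟨e, rfl⟩ := Nat.exists_eq_add_of_le h
  rw [weight_add]
  omega

theorem weight_le_weight {k k' : ℕ} {i i' : Fin m} (h : weight n k i ≤ weight n k' i') :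
    (k : ℤ) - n i ≤ k' - n i' ∧ ((k : ℤ) - n i = k' - n i' → i' ≤ i) := by
  have hi : n i ≤ ∑ j, n j := Finset.single_le_sum (fun _ _ => Nat.zero_le _) (Finset.mem_univ i)
  have hi' : n i' ≤ ∑ j, n j :=
    Finset.single_le_sum (fun _ _ => Nat.zero_le _) (Finset.mem_univ i')
  have hlt := i'.isLt
  simp only [weight] at h
  set a := k + ∑ j, n j - n i
  set c := k' + ∑ j, n j - n i'
  have hac : a ≤ c := by
    by_contra! hca
    have := Nat.mul_le_mul_right m (Nat.succ_le_of_lt hca)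
    rw [Nat.succ_mul] at this
    omega
  refine ⟨by omega, fun hEq => ?_⟩
  have : a = c := by omega
  rw [this] at h
  exact Fin.le_def.mpr (by omega)

theorem weight_injective {k k' : ℕ} {i i' : Fin m} (h : weight n k i = weight n k' i') :
    k = k' ∧ i = i' := by
  obtain ⟨h₁, h₁'⟩ := weight_le_weight h.le
  obtain ⟨h₂, h₂'⟩ := weight_le_weight h.ge
  have hi : i = i' := le_antisymm (h₂' (by omega)) (h₁' (by omega))
  subst hi
  exact ⟨by omega, rfl⟩

section Semiring

variable {R : Type*} [Semiring R]

def weightLT (n : Fin m → ℕ) (W : ℕ) : Submodule R (Fin m → R[X]) where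
  carrier := {p | ∀ i k, W ≤ weight n k i → (p i).coeff k = 0}
  zero_mem' := by simp
  add_mem' hp hq i k hk := by simp [hp i k hk, hq i k hk]
  smul_mem' c p hp i k hk := by simp [hp i k hk]

theorem weightLT_mono {W W' : ℕ} (h : W ≤ W') : weightLT (R := R) n W ≤ weightLT n W' :=
  fun _ hp i k hk => hp i k (h.trans hk)

theorem exists_mem_weightLT (p : Fin m → R[X]) : ∃ W, p ∈ weightLT n W := by
  refine ⟨Finset.univ.sup (fun i => weight n (p i).natDegree i) + 1, fun i k hk => ?_⟩
  by_contra hne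
  have := (weight_mono n (le_natDegree_of_ne_zero hne) i).trans
    (Finset.le_sup (f := fun i => weight n (p i).natDegree i) (Finset.mem_univ i))
  omega

theorem smul_mem_weightLT_of_natDegree_le {W e : ℕ} {p : Fin m → R[X]} {a : R[X]}
    (hp : p ∈ weightLT n W) (ha : a.natDegree ≤ e) : a • p ∈ weightLT n (W + e * m) := by
  intro i k hk
  rw [Pi.smul_apply, smul_eq_mul, coeff_mul]
  refine Finset.sum_eq_zero fun x hx => ?_
  rw [Finset.HasAntidiagonal.mem_antidiagonal] at hx
  by_cases hx₁ : x.1 ≤ a.natDegree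
  · have : W ≤ weight n x.2 i := by
      have := Nat.mul_le_mul_right m (hx₁.trans ha)
      have h := weight_add n x.2 x.1 i
      rw [add_comm x.2, hx] at h
      omega
    rw [hp i x.2 this, mul_zero]
  · rw [coeff_eq_zero_of_natDegree_lt (not_le.mp hx₁), zero_mul]

def IsLeadingTerm (n : Fin m → ℕ) (p : Fin m → R[X]) (j : Fin m) (d : ℕ) : Prop :=
  (p j).coeff d ≠ 0 ∧ p ∈ weightLT n (weight n d j + 1)

variable {p : Fin m → R[X]} {j : Fin m} {d : ℕ}

theorem exists_isLeadingTerm (hp : p ≠ 0) : ∃ j d, IsLeadingTerm n p j d := by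
  obtain ⟨i, hi⟩ := Function.ne_iff.mp hp
  obtain ⟨⟨j, d⟩, hjd, hmax⟩ := Finset.exists_max_image
    (Finset.univ.sigma fun i => (p i).support) (fun t => weight n t.2 t.1)
    ⟨⟨i, (p i).natDegree⟩, by simpa using hi⟩
  refine ⟨j, d, by simpa using hjd, fun i k hk => ?_⟩
  by_contra hne
  have := hmax ⟨i, k⟩ (by simpa using hne)
  dsimp only at this
  omega

theorem IsLeadingTerm.weight_le (h : IsLeadingTerm n p j d) {i : Fin m} {k : ℕ}
    (hk : (p i).coeff k ≠ 0) : weight n k i ≤ weight n d j := by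
  by_contra! hlt
  exact hk (h.2 i k hlt)

theorem IsLeadingTerm.apply_ne_zero (h : IsLeadingTerm n p j d) : p j ≠ 0 :=
  fun h0 => h.1 (by rw [h0, coeff_zero])

theorem IsLeadingTerm.natDegree_eq (h : IsLeadingTerm n p j d) : (p j).natDegree = d := by
  refine le_antisymm ?_ (le_natDegree_of_ne_zero h.1)
  have := (weight_le_weight (h.weight_le (coeff_ne_zero_of_eq_degree
    (degree_eq_natDegree h.apply_ne_zero)))).1
  omega

theorem IsLeadingTerm.le_defectTerm (h : IsLeadingTerm n p j d) (i : Fin m) :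
    (((n j : ℤ) - d : ℤ) : WithTop ℤ) ≤ defectTerm (n i) (p i) ∧
      (i < j → (((n j : ℤ) - d : ℤ) : WithTop ℤ) < defectTerm (n i) (p i)) := by
  by_cases hpi : p i = 0
  · have htop : defectTerm (n i) (p i) = ⊤ := by simp [hpi, defectTerm]
    exact htop ▸ ⟨le_top, fun _ => WithTop.coe_lt_top _⟩
  have hw := weight_le_weight (h.weight_le (coeff_ne_zero_of_eq_degree
    (degree_eq_natDegree hpi)))
  rw [defectTerm_of_ne_zero hpi, WithTop.coe_le_coe, WithTop.coe_lt_coe]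
  refine ⟨by omega, fun hij => ?_⟩
  by_contra! hle
  exact absurd (hw.2 (by omega)) (not_le.mpr hij)

theorem IsLeadingTerm.defect_eq (h : IsLeadingTerm n p j d) :
    defect n p = (((n j : ℤ) - d : ℤ) : WithTop ℤ) := by
  refine le_antisymm ?_ (Finset.le_inf fun i _ => (h.le_defectTerm i).1)
  calc defect n p ≤ defectTerm (n j) (p j) := Finset.inf_le (Finset.mem_univ j)
    _ = _ := by rw [defectTerm_of_ne_zero h.apply_ne_zero, h.natDegree_eq]

theorem IsLeadingTerm.isCriticalIndex (h : IsLeadingTerm n p j d) : IsCriticalIndex n p j := by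
  refine ⟨le_antisymm ?_ (h.defect_eq ▸ (h.le_defectTerm j).1), fun i hij => ?_⟩
  · rw [h.defect_eq, defectTerm_of_ne_zero h.apply_ne_zero, h.natDegree_eq]
  · rw [h.defect_eq]
    exact ((h.le_defectTerm i).2 hij).ne'

theorem IsLeadingTerm.smul_mem_weightLT (h : IsLeadingTerm n p j d) {a : R[X]} {e : ℕ}
    (ha : a.natDegree ≤ e) : a • p ∈ weightLT n (weight n (d + e) j + 1) := by
  rw [weight_add, add_right_comm]
  exact smul_mem_weightLT_of_natDegree_le h.2 ha

end Semiring

section Ring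

variable {R : Type*} [Ring R]

def ReducibleTermsLT (n : Fin m → ℕ) (S : Finset (Fin m)) (d : Fin m → ℕ) (W : ℕ)
    (p : Fin m → R[X]) : Prop :=
  ∀ s ∈ S, ∀ k, d s ≤ k → W ≤ weight n k s → (p s).coeff k = 0

variable {S : Finset (Fin m)} {d : Fin m → ℕ}

theorem ReducibleTermsLT.sub_smul {p G : Fin m → R[X]} {s : Fin m} {k : ℕ}
    (hp : ReducibleTermsLT n S d (weight n k s + 1) p) (hk : d s ≤ k)
    (hG : IsLeadingTerm n G s (d s)) (hG1 : (G s).coeff (d s) = 1) :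
    ReducibleTermsLT n S d (weight n k s)
      (p - (C ((p s).coeff k) * X ^ (k - d s)) • G) := by
  intro s' hs' k' hk' hw
  have hsmul := hG.smul_mem_weightLT (natDegree_C_mul_X_pow_le ((p s).coeff k) (k - d s))
  rw [Nat.add_sub_cancel' hk] at hsmul
  rcases hw.lt_or_eq with hlt | heq
  · have h₁ := hsmul s' k' hlt
    rw [Pi.smul_apply, smul_eq_mul] at h₁
    rw [Pi.sub_apply, coeff_sub, hp s' hs' k' hk' hlt, Pi.smul_apply, smul_eq_mul, h₁, sub_zero]
  · obtain ⟨rfl, rfl⟩ := weight_injective heq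
    simp [mul_assoc, coeff_X_pow_mul', Nat.sub_sub_self hk, hG1]

theorem exists_sum_smul_remainder_degree_lt {G : Fin m → Fin m → R[X]}
    (hG : ∀ s ∈ S, IsLeadingTerm n (G s) s (d s) ∧ (G s s).coeff (d s) = 1)
    (W : ℕ) (p : Fin m → R[X]) (hp : ReducibleTermsLT n S d W p) :
    ∃ α : Fin m → R[X], ∑ s ∈ S, α s • G s ∈ weightLT n W ∧
      ∀ s ∈ S, ((p - ∑ s ∈ S, α s • G s) s).degree < d s := by
  induction W generalizing p with
  | zero =>
    refine ⟨0, by simp, fun s hs => ?_⟩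
    simpa [degree_lt_iff_coeff_zero] using fun k hk => hp s hs k hk (Nat.zero_le _)
  | succ w ih =>
    by_cases hw : ∃ s ∈ S, ∃ k, d s ≤ k ∧ weight n k s = w
    · obtain ⟨s, hs, k, hk, rfl⟩ := hw
      set a := C ((p s).coeff k) * X ^ (k - d s)
      obtain ⟨α, hα, hrem⟩ := ih _ (hp.sub_smul hk (hG s hs).1 (hG s hs).2)
      have hsmul : a • G s ∈ weightLT n (weight n k s + 1) := by
        simpa [Nat.add_sub_cancel' hk] using
          (hG s hs).1.smul_mem_weightLT (natDegree_C_mul_X_pow_le ((p s).coeff k) (k - d s))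
      have hsum : ∑ t ∈ S, (α t + if t = s then a else 0) • G t = ∑ t ∈ S, α t • G t + a • G s :=
        by simp [add_smul, Finset.sum_add_distrib, ite_smul, hs]
      refine ⟨fun t => α t + if t = s then a else 0, ?_, fun t ht => ?_⟩
      · rw [hsum]
        exact add_mem (weightLT_mono (Nat.le_succ _) hα) hsmul
      · rw [hsum, ← sub_sub, sub_right_comm]
        exact hrem t ht
    · push Not at hw
      obtain ⟨α, hα, hrem⟩ := ih p fun s hs k hk hwk =>
        hp s hs k hk (Nat.lt_of_le_of_ne hwk (hw s hs k hk).symm)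
      exact ⟨α, weightLT_mono (Nat.le_succ _) hα, hrem⟩

variable {F : Fin m → Fin m → R[X]}

theorem exists_isLeadingTerm_sum_smul
    (hF : ∀ j, IsLeadingTerm n (F j) j (d j) ∧ (F j j).coeff (d j) = 1)
    {β : Fin m → R[X]} (hβ : β ≠ 0) :
    ∃ j₀, IsLeadingTerm n (∑ j, β j • F j) j₀ (d j₀ + (β j₀).natDegree) ∧
      ∀ j, β j ≠ 0 →
        weight n (d j + (β j).natDegree) j ≤ weight n (d j₀ + (β j₀).natDegree) j₀ := by
  classical
  obtain ⟨j₀, hj₀, hmax⟩ := Finset.exists_max_image (Finset.univ.filter (β · ≠ 0))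
    (fun j => weight n (d j + (β j).natDegree) j)
    (by simpa [Finset.filter_nonempty_iff] using Function.ne_iff.mp hβ)
  simp only [Finset.mem_filter, Finset.mem_univ, true_and] at hj₀ hmax
  set w₀ := weight n (d j₀ + (β j₀).natDegree) j₀
  have hrest : ∑ j ∈ Finset.univ.erase j₀, β j • F j ∈ weightLT n w₀ := by
    refine Submodule.sum_mem _ fun j hj => ?_
    by_cases hβj : β j = 0
    · simp [hβj]
    have hlt : weight n (d j + (β j).natDegree) j < w₀ := (hmax j hβj).lt_of_ne
      fun h => (Finset.mem_erase.mp hj).1 (weight_injective h).2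
    exact weightLT_mono hlt ((hF j).1.smul_mem_weightLT le_rfl)
  have hcoeff : (β j₀ * F j₀ j₀).coeff (d j₀ + (β j₀).natDegree) = (β j₀).leadingCoeff := by
    have hmonic : (F j₀ j₀).leadingCoeff = 1 := by
      rw [leadingCoeff, (hF j₀).1.natDegree_eq, (hF j₀).2]
    rw [← (hF j₀).1.natDegree_eq, add_comm, coeff_mul_degree_add_degree, hmonic, mul_one]
  rw [← Finset.add_sum_erase _ _ (Finset.mem_univ j₀)]
  refine ⟨j₀, ⟨?_, add_mem ((hF j₀).1.smul_mem_weightLT le_rfl)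
    (weightLT_mono (Nat.le_succ _) hrest)⟩, hmax⟩
  rw [Pi.add_apply, coeff_add, hrest j₀ _ le_rfl, add_zero, Pi.smul_apply, smul_eq_mul, hcoeff]
  exact leadingCoeff_ne_zero.mpr hj₀

theorem sum_smul_ne_zero (hF : ∀ j, IsLeadingTerm n (F j) j (d j) ∧ (F j j).coeff (d j) = 1)
    {β : Fin m → R[X]} (hβ : β ≠ 0) : ∑ j, β j • F j ≠ 0 := by
  obtain ⟨j₀, hlead, -⟩ := exists_isLeadingTerm_sum_smul hF hβ
  exact fun h => hlead.apply_ne_zero (congr_fun h j₀)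

theorem defect_sum_smul_add_natDegree_le
    (hF : ∀ j, IsLeadingTerm n (F j) j (d j) ∧ (F j j).coeff (d j) = 1)
    {β : Fin m → R[X]} {r : Fin m} (hr : β r ≠ 0) :
    defect n (∑ j, β j • F j) + (((β r).natDegree : ℤ) : WithTop ℤ) ≤ defect n (F r) := by
  obtain ⟨j₀, hlead, hmax⟩ := exists_isLeadingTerm_sum_smul hF (Function.ne_iff.mpr ⟨r, hr⟩)
  have := (weight_le_weight (hmax r hr)).1
  rw [hlead.defect_eq, (hF r).1.defect_eq, ← WithTop.coe_add, WithTop.coe_le_coe]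
  push_cast at this ⊢
  omega

end Ring

section Solutions

variable {R : Type*} [CommSemiring R] (f : Fin m → PowerSeries R) (σ : ℕ)

theorem isSolution_iff_X_pow_dvd {p : Fin m → R[X]} :
    IsSolution f σ p ↔ PowerSeries.X ^ σ ∣ ∑ i, (p i : PowerSeries R) * f i :=
  PowerSeries.X_pow_dvd_iff.symm

def solutions : Submodule R[X] (Fin m → R[X]) where
  carrier := {p | IsSolution f σ p}
  zero_mem' := by simp [IsSolution]
  add_mem' {p q} hp hq := by
    change IsSolution f σ p at hp
    change IsSolution f σ q at hq
    change IsSolution f σ (p + q)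
    rw [isSolution_iff_X_pow_dvd] at hp hq ⊢
    simpa [add_mul, Finset.sum_add_distrib] using dvd_add hp hq
  smul_mem' a p hp := by
    change IsSolution f σ p at hp
    change IsSolution f σ (a • p)
    rw [isSolution_iff_X_pow_dvd] at hp ⊢
    simpa [mul_assoc, ← Finset.mul_sum] using dvd_mul_of_dvd_right hp (a : PowerSeries R)

theorem isSolution_single (j : Fin m) : IsSolution f σ (Pi.single j (X ^ σ)) := by
  rw [isSolution_iff_X_pow_dvd, Finset.sum_eq_single j (fun i _ hij => by simp [hij])
    (by simp)]
  simp

theorem exists_isLeadingTerm_solution [Nontrivial R] (n : Fin m → ℕ) (j : Fin m) :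
    ∃ d p, IsSolution f σ p ∧ IsLeadingTerm n p j d := by
  refine ⟨σ, _, isSolution_single f σ j, by simp, fun i k hk => ?_⟩
  by_cases hij : i = j
  · subst hij
    simp only [Pi.single_eq_same, coeff_X_pow]
    exact if_neg (by rintro rfl; omega)
  · simp [hij]

end Solutions

section CommRing

variable {R : Type*} [CommRing R] {f : Fin m → PowerSeries R} {σ : ℕ} {d : Fin m → ℕ}

theorem exists_reduced_of_isLeadingTerm {G : Fin m → Fin m → R[X]}
    (hsol : ∀ j, IsSolution f σ (G j))
    (hG : ∀ j, IsLeadingTerm n (G j) j (d j) ∧ (G j j).coeff (d j) = 1) :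
    ∃ F : Fin m → Fin m → R[X], ∀ j, IsSolution f σ (F j) ∧
      (IsLeadingTerm n (F j) j (d j) ∧ (F j j).coeff (d j) = 1) ∧
      ∀ s, s ≠ j → (F j s).degree < d s := by
  -- the terms of `G j` outside position `j` lie strictly below its leading term
  have hdiv (j : Fin m) := exists_sum_smul_remainder_degree_lt (S := Finset.univ.erase j)
    (fun s _ => hG s) (weight n (d j) j) (G j) fun s hs k _ hk => by_contra fun hne =>
      (Finset.mem_erase.mp hs).1 (weight_injective
        (le_antisymm ((hG j).1.weight_le hne) hk)).2
  choose α hα hrem using hdiv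
  refine ⟨fun j => G j - ∑ s ∈ Finset.univ.erase j, α j s • G s, fun j => ⟨?_, ?_,
    fun s hs => hrem j s (Finset.mem_erase.mpr ⟨hs, Finset.mem_univ s⟩)⟩⟩
  · exact sub_mem (hsol j) (Submodule.sum_mem _ fun s _ => (solutions f σ).smul_mem _ (hsol s))
  · have hcoeff : ((G j - ∑ s ∈ Finset.univ.erase j, α j s • G s) j).coeff (d j) = 1 := by
      rw [Pi.sub_apply, coeff_sub, hα j j (d j) le_rfl, sub_zero, (hG j).2]
    refine ⟨⟨?_, sub_mem (hG j).1.2 (weightLT_mono (Nat.le_succ _) (hα j))⟩, hcoeff⟩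
    rw [hcoeff, ← (hG j).2]
    exact (hG j).1.1

variable {F : Fin m → Fin m → R[X]}

theorem exists_eq_sum_smul_of_minimal (hsol : ∀ j, IsSolution f σ (F j))
    (hF : ∀ j, IsLeadingTerm n (F j) j (d j) ∧ (F j j).coeff (d j) = 1)
    (hmin : ∀ j k p, IsSolution f σ p → IsLeadingTerm n p j k → d j ≤ k)
    {q : Fin m → R[X]} (hq : IsSolution f σ q) : ∃ α : Fin m → R[X], q = ∑ j, α j • F j := by
  obtain ⟨W, hW⟩ := exists_mem_weightLT (n := n) q
  obtain ⟨α, -, hrem⟩ := exists_sum_smul_remainder_degree_lt (S := Finset.univ)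
    (fun s _ => hF s) W q fun s _ k _ hk => hW s k hk
  refine ⟨α, sub_eq_zero.mp (by_contra fun hr => ?_)⟩
  obtain ⟨j, k, hjk⟩ := exists_isLeadingTerm hr
  have hrsol : q - ∑ j, α j • F j ∈ solutions f σ :=
    sub_mem hq (Submodule.sum_mem _ fun j _ => Submodule.smul_mem _ _ (hsol j))
  exact hjk.1 (coeff_eq_zero_of_degree_lt ((hrem j (Finset.mem_univ j)).trans_le
    (by exact_mod_cast hmin j k _ hrsol hjk)))

theorem eq_sum_smul_iff {q : Fin m → R[X]} {α : Fin m → R[X]} {P : Fin m → Fin m → R[X]} :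
    q = ∑ r, α r • P r ↔ ∀ i, q i = ∑ r, α r * P r i := by
  simp [funext_iff, Finset.sum_apply]

theorem isSigmaBasis_of_minimal (hsol : ∀ j, IsSolution f σ (F j))
    (hF : ∀ j, IsLeadingTerm n (F j) j (d j) ∧ (F j j).coeff (d j) = 1)
    (hmin : ∀ j k p, IsSolution f σ p → IsLeadingTerm n p j k → d j ≤ k) :
    IsSigmaBasis f n σ F := by
  refine ⟨hsol, fun q hq => ⟨?_, fun α hα r hr => ?_⟩⟩
  · obtain ⟨α, rfl⟩ := exists_eq_sum_smul_of_minimal hsol hF hmin hq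
    refine ⟨α, eq_sum_smul_iff.mp rfl, fun α' hα' => by_contra fun hne => ?_⟩
    apply sum_smul_ne_zero hF (sub_ne_zero.mpr hne)
    simp [sub_smul, Finset.sum_sub_distrib, ← eq_sum_smul_iff.mpr hα']
  · rw [eq_sum_smul_iff.mpr hα]
    exact defect_sum_smul_add_natDegree_le hF hr

theorem isNormalisedSeq_comp
    (hF : ∀ j, IsLeadingTerm n (F j) j (d j) ∧ (F j j).coeff (d j) = 1)
    (hred : ∀ j s, s ≠ j → (F j s).degree < d s) {π : Equiv.Perm (Fin m)}
    (hπ : StrictMono fun r => toLex ((d (π r) : ℤ) - n (π r), π r)) :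
    IsNormalisedSeq n (F ∘ π) := by
  have hcrit (r : Fin m) : IsCriticalIndex n (F (π r)) (π r) := (hF (π r)).1.isCriticalIndex
  refine ⟨fun r s hrs => ?_, fun r s hrs j hj => ?_, fun r => ⟨π r, hcrit r, ?_⟩⟩
  · simp only [Function.comp_apply, (hF _).1.defect_eq, WithTop.coe_lt_coe, WithTop.coe_inj]
    rcases Prod.Lex.toLex_lt_toLex.mp (hπ hrs) with h | ⟨h, h'⟩
    · exact Or.inl (by omega)
    · exact Or.inr ⟨by omega, fun i j hi hj => hi.unique (hcrit r) ▸ hj.unique (hcrit s) ▸ h'⟩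
  · obtain rfl := hj.unique (hcrit s)
    simp only [Function.comp_apply]
    rw [degree_eq_natDegree (p := F (π s) (π s)), (hF _).1.natDegree_eq]
    · exact hred (π r) (π s) fun h => hrs (π.injective h).symm
    · exact (hF (π s)).1.apply_ne_zero
  · rw [Function.comp_apply, Monic, leadingCoeff, (hF _).1.natDegree_eq]
    exact (hF _).2

end CommRing

section Field

variable {K : Type*} [Field K]

theorem IsLeadingTerm.smul_inv_coeff {p : Fin m → K[X]} {j : Fin m} {d : ℕ}
    (h : IsLeadingTerm n p j d) :
    IsLeadingTerm n (C ((p j).coeff d)⁻¹ • p) j d ∧ ((C ((p j).coeff d)⁻¹ • p) j).coeff d = 1 := by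
  have hcoeff : ((C ((p j).coeff d)⁻¹ • p) j).coeff d = 1 := by
    rw [Pi.smul_apply, smul_eq_mul, coeff_C_mul, inv_mul_cancel₀ h.1]
  refine ⟨⟨by rw [hcoeff]; exact one_ne_zero, ?_⟩, hcoeff⟩
  simpa using smul_mem_weightLT_of_natDegree_le (e := 0) h.2 (natDegree_C _).le

theorem exists_minimal_monic_solutions (f : Fin m → PowerSeries K) (σ : ℕ) (n : Fin m → ℕ) :
    ∃ d : Fin m → ℕ, (∀ j k p, IsSolution f σ p → IsLeadingTerm n p j k → d j ≤ k) ∧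
      ∃ G : Fin m → Fin m → K[X], ∀ j, IsSolution f σ (G j) ∧
        IsLeadingTerm n (G j) j (d j) ∧ (G j j).coeff (d j) = 1 := by
  classical
  refine ⟨fun j => Nat.find (exists_isLeadingTerm_solution f σ n j),
    fun j k p hp hlead => Nat.find_min' _ ⟨p, hp, hlead⟩, ?_⟩
  choose G hsol hlead using fun j => Nat.find_spec (exists_isLeadingTerm_solution f σ n j)
  exact ⟨fun j => C ((G j j).coeff _)⁻¹ • G j, fun j =>
    ⟨(solutions f σ).smul_mem _ (hsol j), (hlead j).smul_inv_coeff⟩⟩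

end Field

end HermitePade

open HermitePade

/-- **Existence of a normalised σ-basis over a field.**  The solution space of every
Hermite–Padé interpolation problem over a field admits a normalised σ-basis: a
sequence of nonzero solutions which is a σ-basis and which is sorted, pairwise
reduced, and has all of its members normalised. -/
theorem normalised_sigma_basis_exists {K : Type*} [Field K] {m : ℕ}
    (f : Fin m → PowerSeries K) (n : Fin m → ℕ) (σ : ℕ) :
    ∃ P : Fin m → Fin m → K[X],
      (∀ r, P r ≠ 0) ∧ IsSigmaBasis f n σ P ∧ IsNormalisedSeq n P := by
  obtain ⟨d, hmin, G, hG⟩ := exists_minimal_monic_solutions f σ n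
  obtain ⟨F, hF⟩ := exists_reduced_of_isLeadingTerm (fun j => (hG j).1) fun j => (hG j).2
  choose hsol hlead hred using hF
  let κ (j : Fin m) : ℤ ×ₗ Fin m := toLex ((d j : ℤ) - n j, j)
  have hκ : Function.Injective κ := fun i j h => congrArg (fun x => (ofLex x).2) h
  let π := Tuple.sort κ
  have hπ : StrictMono (κ ∘ π) :=
    (Tuple.monotone_sort κ).strictMono_of_injective (hκ.comp π.injective)
  exact ⟨F ∘ π, fun r h => (hlead (π r)).1.apply_ne_zero (congr_fun h (π r)),
    (isSigmaBasis_of_minimal hsol hlead hmin).comp_perm π, isNormalisedSeq_comp hlead hred hπ⟩
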